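/- Define C(η) := 2η + 3(√(1 + η⁴/4 − 2η²) − (1 − η²/2)) for η ∈ [2/3, √3−1] (the radicand 1 + η⁴/4 − 2η² is nonnegative on this interval). Then: (i) C(2/3) = √13/3 − 1 > 0; (ii) C(√3−1) = 1 − √3 < 0; (iii) C(η) < √13/3 − 1 for every η ∈ (2/3, √3−1], so the supremum of C over (2/3, √3−1] equals √13/3 − 1 and is not attained; and (iv) there exists δ > 0 such that C(η) > 0 for all η ∈ (2/3, 2/3 + δ). (The optimal violation of the LSW inequality for trine axes is C_max/6 = (√13/3 − 1)/6 ≈ 0.03364, approached as η → 2/3.) -/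

import Mathlib

/-!
With `q` the radicand, `C η < √13/3 - 1` is `3 √q < R := √13/3 + 2 - 2η - 3η²/2`. Where `R > 0`
this follows from `R² - 9q = (3η - 2) (18η² + (60 - 3√13) η + 16 - 6√13) / 9 > 0`: the second
factor increases with `η` and equals `8 (8 - √13)` at `η = 2/3`. As `C (2/3) = √13/3 - 1 > 0`,
continuity of `C` at `2/3` gives both the supremum and the positivity just to the right of `2/3`.
-/

noncomputable section

def Cfun (η : ℝ) : ℝ := 2*η + 3*(Real.sqrt (1 + η^4/4 - 2*η^2) - (1 - η^2/2))

open Set Filter Topology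

theorem ContinuousWithinAt.isLUB_image {α β : Type*} [TopologicalSpace α] [TopologicalSpace β]
    [LinearOrder β] [OrderTopology β] {f : α → β} {s : Set α} {a : α}
    (hf : ContinuousWithinAt f s a) (ha : a ∈ closure s) (hle : ∀ x ∈ s, f x ≤ f a) :
    IsLUB (f '' s) (f a) :=
  isLUB_of_mem_closure (forall_mem_image.2 hle) (hf.mem_closure_image ha)

theorem continuous_Cfun : Continuous Cfun := by
  unfold Cfun
  fun_prop

theorem Cfun_two_thirds : Cfun (2/3) = Real.sqrt 13 / 3 - 1 := by
  have hsqrt : Real.sqrt (1 + (2/3 : ℝ)^4/4 - 2*(2/3)^2) = Real.sqrt 13 / 9 := by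
    rw [show (1 + (2/3 : ℝ)^4/4 - 2*(2/3)^2) = 13 / 9^2 by norm_num, Real.sqrt_div' _ (by norm_num),
      Real.sqrt_sq (by norm_num)]
  rw [Cfun, hsqrt]
  ring

theorem Cfun_sqrt_three_sub_one : Cfun (Real.sqrt 3 - 1) = 1 - Real.sqrt 3 := by
  have h3 : Real.sqrt 3 ^ 2 = 3 := Real.sq_sqrt (by norm_num)
  have hradicand : 1 + (Real.sqrt 3 - 1)^4/4 - 2*(Real.sqrt 3 - 1)^2 = 0 := by
    linear_combination (Real.sqrt 3 ^ 2/4 - Real.sqrt 3 + 1/4) * h3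
  rw [Cfun, hradicand, Real.sqrt_zero]
  linear_combination (3/2) * h3

theorem Cfun_lt_of_mem_Ioc {η : ℝ} (hη : η ∈ Ioc (2/3 : ℝ) (Real.sqrt 3 - 1)) :
    Cfun η < Real.sqrt 13 / 3 - 1 := by
  obtain ⟨hlo, hhi⟩ := hη
  set t := Real.sqrt 13
  have ht3 : 3 < t := (Real.lt_sqrt (by norm_num)).2 (by norm_num)
  have ht : t ^ 2 = 13 := Real.sq_sqrt (by norm_num)
  have ht4 : t < 4 := (Real.sqrt_lt' (by norm_num)).2 (by norm_num)
  have hη2 : η^2 + 2*η ≤ 2 := by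
    have h3 : Real.sqrt 3 ^ 2 = 3 := Real.sq_sqrt (by norm_num)
    nlinarith
  have hR : 0 < t/3 + 2 - 2*η - 3*η^2/2 := by linarith
  have hfactor : 0 < 18*η^2 + (60 - 3*t)*η + 16 - 6*t := by nlinarith
  have hsq : 1 + η^4/4 - 2*η^2 < ((t/3 + 2 - 2*η - 3*η^2/2)/3)^2 := by
    have hprod := mul_pos (sub_pos.2 (by linarith : 2 < 3*η)) hfactor
    linear_combination hprod / 81 - ht / 81
  have hsqrt : Real.sqrt (1 + η^4/4 - 2*η^2) < (t/3 + 2 - 2*η - 3*η^2/2)/3 :=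
    (Real.sqrt_lt' (by linarith)).2 hsq
  rw [Cfun]
  linarith

/-- (i) C(2/3) = √13/3 - 1 > 0; (ii) C(√3-1) = 1 - √3 < 0; (iii) C(η) < √13/3 - 1 on
(2/3, √3-1], so sup C over (2/3, √3-1] is √13/3 - 1 and it is not attained;
(iv) C(η) > 0 for η slightly above 2/3. -/
theorem Cfun_properties :
    Cfun (2/3) = Real.sqrt 13 / 3 - 1 ∧
    0 < Real.sqrt 13 / 3 - 1 ∧
    Cfun (Real.sqrt 3 - 1) = 1 - Real.sqrt 3 ∧
    1 - Real.sqrt 3 < 0 ∧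
    (∀ η ∈ Set.Ioc (2/3 : ℝ) (Real.sqrt 3 - 1), Cfun η < Real.sqrt 13 / 3 - 1) ∧
    IsLUB (Cfun '' Set.Ioc (2/3 : ℝ) (Real.sqrt 3 - 1)) (Real.sqrt 13 / 3 - 1) ∧
    (Real.sqrt 13 / 3 - 1) ∉ Cfun '' Set.Ioc (2/3 : ℝ) (Real.sqrt 3 - 1) ∧
    ∃ δ > 0, ∀ η ∈ Set.Ioo (2/3 : ℝ) (2/3 + δ), 0 < Cfun η := by
  have hpos : 0 < Real.sqrt 13 / 3 - 1 := by
    have : 3 < Real.sqrt 13 := (Real.lt_sqrt (by norm_num)).2 (by norm_num)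
    linarith
  have hsqrt3 : 1 < Real.sqrt 3 := Real.lt_sqrt_of_sq_lt (by norm_num)
  have hinterval : (2/3 : ℝ) < Real.sqrt 3 - 1 := by
    have : (5/3 : ℝ) < Real.sqrt 3 := Real.lt_sqrt_of_sq_lt (by norm_num)
    linarith
  refine ⟨Cfun_two_thirds, hpos, Cfun_sqrt_three_sub_one, by linarith,
    fun η hη => Cfun_lt_of_mem_Ioc hη, ?_, ?_, ?_⟩
  · rw [← Cfun_two_thirds]
    refine continuous_Cfun.continuousWithinAt.isLUB_image ?_ fun η hη => ?_
    · rw [closure_Ioc hinterval.ne]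
      exact ⟨le_rfl, hinterval.le⟩
    · exact (Cfun_two_thirds ▸ Cfun_lt_of_mem_Ioc hη).le
  · rintro ⟨η, hη, hCη⟩
    exact (Cfun_lt_of_mem_Ioc hη).ne hCη
  · have hnear : ∀ᶠ η in 𝓝[>] (2/3 : ℝ), 0 < Cfun η := nhdsWithin_le_nhds <|
      continuousAt_const.eventually_lt continuous_Cfun.continuousAt (Cfun_two_thirds ▸ hpos)
    obtain ⟨u, hu, hsub⟩ := mem_nhdsGT_iff_exists_Ioo_subset.1 hnear
    exact ⟨u - 2/3, sub_pos.2 hu, fun η hη => hsub (by rwa [add_sub_cancel] at hη)⟩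

end
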